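/- arXiv:2602.23558 — 2 statements merged into one kernel-verified Lean document; each statement's English description precedes it below -/
import Mathlib

section
/- Let T : ℝⁿ → ℝⁿ be a linear isometry (orthogonal transformation) and α ∈ ℝⁿ with ‖α‖ < 2. Then there exists a unique linear equivalence A of ℝ^{n+1} preserving the Minkowski product and mapping Hⁿ into Hⁿ such that: for every y ∈ ℝⁿ with ‖y‖ + ‖T y + α‖ < 2, writing Ψ(y, T y + α) = (x, x'), one has x' = A x. Moreover, this same A satisfies: for every y ∈ ℝⁿ with ‖y‖ + ‖T⁻¹(y − α)‖ < 2, writing Ψ(y, T⁻¹(y − α)) = (x, x''), one has x'' = A⁻¹ x. -/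
open scoped BigOperators

noncomputable section

/-- The Minkowski product on `ℝ^{n+1}`: `⟨x,y⟩ = -x₀y₀ + ∑_{i=1}^n xᵢyᵢ`. -/
def mink {n : ℕ} (x y : Fin (n + 1) → ℝ) : ℝ :=
  -(x 0 * y 0) + ∑ i : Fin n, x i.succ * y i.succ

/-- The vector `e = (1, 0, …, 0)` in `ℝ^{n+1}`. -/
def eVec (n : ℕ) : Fin (n + 1) → ℝ := fun i => if i = 0 then 1 else 0

/-- Projection `𝒫 : ℝ^{n+1} → ℝⁿ`, forgetting the 0-th coordinate, landing in
Euclidean space (with the Euclidean norm). -/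
def proj {n : ℕ} (x : Fin (n + 1) → ℝ) : EuclideanSpace ℝ (Fin n) :=
  WithLp.toLp 2 (fun i => x i.succ)

/-- The hyperboloid model `Hⁿ = {x : ⟨x,x⟩ = -1, x₀ > 0}`. -/
def Hyp (n : ℕ) : Set (Fin (n + 1) → ℝ) := {x | mink x x = -1 ∧ 0 < x 0}

/-- First component of the Pogorelov map: `P₁(x,y) = 2𝒫(x)/(-⟨x+y,e⟩)`. -/
def P1 {n : ℕ} (x y : Fin (n + 1) → ℝ) : EuclideanSpace ℝ (Fin n) :=
  (2 / (-(mink (x + y) (eVec n)))) • proj x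

/-- Second component of the Pogorelov map: `P₂(x,y) = 2𝒫(y)/(-⟨x+y,e⟩)`. -/
def P2 {n : ℕ} (x y : Fin (n + 1) → ℝ) : EuclideanSpace ℝ (Fin n) :=
  (2 / (-(mink (x + y) (eVec n)))) • proj y

/-- The function `f(a,b) = (2+‖a‖+‖b‖)(2-‖a‖+‖b‖)(2+‖a‖-‖b‖)(2-‖a‖-‖b‖)`. -/
def fQ {n : ℕ} (a b : EuclideanSpace ℝ (Fin n)) : ℝ :=
  (2 + ‖a‖ + ‖b‖) * (2 - ‖a‖ + ‖b‖) * (2 + ‖a‖ - ‖b‖) * (2 - ‖a‖ - ‖b‖)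

/-- The vector in `ℝ^{n+1}` with 0-th coordinate `t` and `𝒫`-projection `v`. -/
def liftVec {n : ℕ} (t : ℝ) (v : EuclideanSpace ℝ (Fin n)) : Fin (n + 1) → ℝ :=
  Fin.cons t (fun i => v i)

/-- First component of `Ψ(a,b)`, namely `(√(‖x̂‖²+1), x̂)` with `x̂ = 4a/√f(a,b)`. -/
def Psi1 {n : ℕ} (a b : EuclideanSpace ℝ (Fin n)) : Fin (n + 1) → ℝ :=
  liftVec (Real.sqrt (‖(4 / Real.sqrt (fQ a b)) • a‖ ^ 2 + 1)) ((4 / Real.sqrt (fQ a b)) • a)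

/-- Second component of `Ψ(a,b)`, namely `(√(‖ŷ‖²+1), ŷ)` with `ŷ = 4b/√f(a,b)`. -/
def Psi2 {n : ℕ} (a b : EuclideanSpace ℝ (Fin n)) : Fin (n + 1) → ℝ :=
  liftVec (Real.sqrt (‖(4 / Real.sqrt (fQ a b)) • b‖ ^ 2 + 1)) ((4 / Real.sqrt (fQ a b)) • b)

/-!
With `f = fQ a b`, the components of `Ψ` are `Ψ₁(a, b) = f^{-1/2} (4 + ‖a‖² - ‖b‖², 4a)` and
`Ψ₂(a, b) = Ψ₁(b, a)`. Take for `A` the rotation `T` followed by the boost sending `e` to the point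
of `Hⁿ` lying over `α / 2` in the Poincaré ball. Then `Ψ₂(y, Ty + α) = A Ψ₁(y, Ty + α)` becomes,
after cancelling `f^{-1/2}`, a polynomial identity in `‖y‖²`, `⟪Ty, α⟫`, `‖α‖²`, using
`‖Ty + α‖² = ‖y‖² + 2⟪Ty, α⟫ + ‖α‖²`. Since `Ψ₂(y, b) = Ψ₁(b, y)`, the statement about `A⁻¹` is the
same identity at `b = T⁻¹(y - α)`. `A` is invertible because it preserves the nondegenerate form
`mink`, and it is unique because the points `Ψ₁(a, Ta + α)` with `a` near `0` span `ℝ^{n+1}`.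
-/

open scoped RealInnerProductSpace

variable {n : ℕ}

section liftVec

@[simp] lemma liftVec_zero (t : ℝ) (v : EuclideanSpace ℝ (Fin n)) : liftVec t v 0 = t := rfl

@[simp] lemma liftVec_succ (t : ℝ) (v : EuclideanSpace ℝ (Fin n)) (i : Fin n) :
    liftVec t v i.succ = v i := rfl

@[simp] lemma proj_liftVec (t : ℝ) (v : EuclideanSpace ℝ (Fin n)) : proj (liftVec t v) = v := rfl

@[simp] lemma proj_zero : proj (0 : Fin (n + 1) → ℝ) = 0 := rfl

@[simp] lemma proj_add (x y : Fin (n + 1) → ℝ) : proj (x + y) = proj x + proj y := rfl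

@[simp] lemma proj_smul (c : ℝ) (x : Fin (n + 1) → ℝ) : proj (c • x) = c • proj x := rfl

lemma liftVec_proj (x : Fin (n + 1) → ℝ) : liftVec (x 0) (proj x) = x :=
  funext fun i => Fin.cases rfl (fun _ => rfl) i

@[simp] lemma liftVec_zero_zero : liftVec 0 (0 : EuclideanSpace ℝ (Fin n)) = 0 :=
  funext fun i => Fin.cases rfl (fun _ => rfl) i

lemma liftVec_add (s t : ℝ) (v w : EuclideanSpace ℝ (Fin n)) :
    liftVec (s + t) (v + w) = liftVec s v + liftVec t w :=
  funext fun i => Fin.cases rfl (fun _ => rfl) i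

lemma liftVec_smul (c t : ℝ) (v : EuclideanSpace ℝ (Fin n)) :
    liftVec (c * t) (c • v) = c • liftVec t v :=
  funext fun i => Fin.cases rfl (fun _ => rfl) i

lemma liftVec_zero_smul (c : ℝ) (v : EuclideanSpace ℝ (Fin n)) :
    liftVec 0 (c • v) = c • liftVec 0 v := by
  rw [← liftVec_smul, mul_zero]

lemma liftVec_one_zero : liftVec 1 (0 : EuclideanSpace ℝ (Fin n)) = eVec n :=
  funext fun i => Fin.cases rfl (fun j => by simp [eVec, Fin.succ_ne_zero]) i

lemma liftVec_eq_smul_eVec_add (t : ℝ) (v : EuclideanSpace ℝ (Fin n)) :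
    liftVec t v = t • eVec n + liftVec 0 v := by
  rw [← liftVec_one_zero, ← liftVec_smul, ← liftVec_add, smul_zero, mul_one, add_zero, zero_add]

lemma mink_liftVec (s t : ℝ) (v w : EuclideanSpace ℝ (Fin n)) :
    mink (liftVec s v) (liftVec t w) = -(s * t) + ⟪v, w⟫ := by
  simp [mink, PiLp.inner_apply, mul_comm]

end liftVec

section Minkowski

lemma eq_zero_of_forall_mink_eq_zero {x : Fin (n + 1) → ℝ} (h : ∀ y, mink x y = 0) : x = 0 := by
  rw [← liftVec_proj x] at h ⊢
  have h0 := h (liftVec 1 0)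
  have h1 := h (liftVec 0 (proj x))
  simp only [mink_liftVec, mul_one, mul_zero, neg_zero, zero_add, inner_zero_right, add_zero,
    neg_eq_zero, real_inner_self_eq_norm_sq, ne_eq, OfNat.ofNat_ne_zero, not_false_eq_true,
    pow_eq_zero_iff, norm_eq_zero] at h0 h1
  rw [h0, h1, liftVec_zero_zero]

lemma injective_of_mink_map_map (A : (Fin (n + 1) → ℝ) →ₗ[ℝ] (Fin (n + 1) → ℝ))
    (hA : ∀ x y, mink (A x) (A y) = mink x y) : Function.Injective A := by
  refine (injective_iff_map_eq_zero A).2 fun x hx => eq_zero_of_forall_mink_eq_zero fun y => ?_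
  rw [← hA, hx, ← liftVec_proj (A y), ← liftVec_proj 0, mink_liftVec]
  simp

end Minkowski

section Psi

variable {a b : EuclideanSpace ℝ (Fin n)}

lemma fQ_comm (a b : EuclideanSpace ℝ (Fin n)) : fQ a b = fQ b a := by
  unfold fQ; ring

lemma fQ_eq (a b : EuclideanSpace ℝ (Fin n)) :
    fQ a b = (4 + ‖a‖ ^ 2 - ‖b‖ ^ 2) ^ 2 - 16 * ‖a‖ ^ 2 := by
  unfold fQ; ring

lemma fQ_pos (hab : ‖a‖ + ‖b‖ < 2) : 0 < fQ a b := by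
  have := norm_nonneg a; have := norm_nonneg b
  have : 0 < 2 - ‖a‖ + ‖b‖ := by linarith
  have : 0 < 2 + ‖a‖ - ‖b‖ := by linarith
  have : 0 < 2 - ‖a‖ - ‖b‖ := by linarith
  unfold fQ
  positivity

lemma Psi2_eq_Psi1 (a b : EuclideanSpace ℝ (Fin n)) : Psi2 a b = Psi1 b a := by
  rw [Psi2, Psi1, fQ_comm]

lemma Psi1_zero_left (b : EuclideanSpace ℝ (Fin n)) : Psi1 0 b = eVec n := by
  simp [Psi1, liftVec_one_zero]

lemma Psi1_eq_smul_liftVec (hab : ‖a‖ + ‖b‖ < 2) :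
    Psi1 a b = (√(fQ a b))⁻¹ • liftVec (4 + ‖a‖ ^ 2 - ‖b‖ ^ 2) ((4 : ℝ) • a) := by
  have hf := fQ_pos hab
  have hsq : ‖(4 / √(fQ a b)) • a‖ ^ 2 + 1 = ((4 + ‖a‖ ^ 2 - ‖b‖ ^ 2) / √(fQ a b)) ^ 2 := by
    rw [norm_smul, mul_pow, Real.norm_eq_abs, sq_abs, div_pow, div_pow, Real.sq_sqrt hf.le]
    field_simp
    rw [fQ_eq]
    ring
  have hnum : 0 ≤ 4 + ‖a‖ ^ 2 - ‖b‖ ^ 2 := by nlinarith [norm_nonneg a, norm_nonneg b]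
  rw [Psi1, hsq, Real.sqrt_sq (by positivity), ← liftVec_smul, smul_smul]
  congr 1 <;> ring_nf

theorem linearMap_ext_Psi1 {M : Type*} [AddCommGroup M] [Module ℝ M]
    {f g : (Fin (n + 1) → ℝ) →ₗ[ℝ] M} (b : EuclideanSpace ℝ (Fin n) → EuclideanSpace ℝ (Fin n))
    {r : ℝ} (hr : 0 < r) (hΩ : ∀ a, ‖a‖ < r → ‖a‖ + ‖b a‖ < 2)
    (h : ∀ a, ‖a‖ < r → f (Psi1 a (b a)) = g (Psi1 a (b a))) : f = g := by
  have he : f (eVec n) = g (eVec n) := by simpa [Psi1_zero_left] using h 0 (by simpa using hr)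
  have hsmall : ∀ a, ‖a‖ < r → f (liftVec 0 a) = g (liftVec 0 a) := by
    intro a ha
    have hk : (√(fQ a (b a)))⁻¹ ≠ 0 := by have := fQ_pos (hΩ a ha); positivity
    have := h a ha
    rw [Psi1_eq_smul_liftVec (hΩ a ha), liftVec_eq_smul_eVec_add, liftVec_zero_smul] at this
    simpa [he, hk] using this
  have hall : ∀ a, f (liftVec 0 a) = g (liftVec 0 a) := by
    intro a
    have hc : 0 < r / (‖a‖ + 1) := by positivity
    have := hsmall ((r / (‖a‖ + 1)) • a) (by
      rw [norm_smul, Real.norm_eq_abs, abs_of_pos hc, div_mul_eq_mul_div, div_lt_iff₀ (by positivity)]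
      nlinarith)
    rw [liftVec_zero_smul, map_smul, map_smul] at this
    exact smul_right_injective M hc.ne' this
  refine LinearMap.ext fun x => ?_
  rw [← liftVec_proj x, liftVec_eq_smul_eVec_add, map_add, map_add, map_smul, map_smul, he, hall]

end Psi

section lorentzMap

/- `T` followed by the boost with `e ↦ ((4 + ‖α‖²) / (4 - ‖α‖²), 4α / (4 - ‖α‖²))`. -/
def lorentzMap (T : EuclideanSpace ℝ (Fin n) ≃ₗᵢ[ℝ] EuclideanSpace ℝ (Fin n))
    (α : EuclideanSpace ℝ (Fin n)) : (Fin (n + 1) → ℝ) →ₗ[ℝ] (Fin (n + 1) → ℝ) where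
  toFun x := liftVec ((x 0 * (4 + ‖α‖ ^ 2) + 4 * ⟪T (proj x), α⟫) / (4 - ‖α‖ ^ 2))
    (T (proj x) + ((4 * x 0 + 2 * ⟪T (proj x), α⟫) / (4 - ‖α‖ ^ 2)) • α)
  map_add' x y := by
    rw [← liftVec_add]
    congr 1
    · simp only [Pi.add_apply, proj_add, map_add, inner_add_left]; ring
    · simp only [Pi.add_apply, proj_add, map_add, inner_add_left]; module
  map_smul' c x := by
    rw [RingHom.id_apply, ← liftVec_smul]
    congr 1
    · simp only [Pi.smul_apply, proj_smul, map_smul, real_inner_smul_left, smul_eq_mul]; ring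
    · simp only [Pi.smul_apply, proj_smul, map_smul, real_inner_smul_left, smul_eq_mul]; module

variable {T : EuclideanSpace ℝ (Fin n) ≃ₗᵢ[ℝ] EuclideanSpace ℝ (Fin n)}
  {α : EuclideanSpace ℝ (Fin n)}

lemma lorentzMap_apply (x : Fin (n + 1) → ℝ) :
    lorentzMap T α x = liftVec ((x 0 * (4 + ‖α‖ ^ 2) + 4 * ⟪T (proj x), α⟫) / (4 - ‖α‖ ^ 2))
      (T (proj x) + ((4 * x 0 + 2 * ⟪T (proj x), α⟫) / (4 - ‖α‖ ^ 2)) • α) := rfl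

lemma mink_lorentzMap (hα : ‖α‖ < 2) (x y : Fin (n + 1) → ℝ) :
    mink (lorentzMap T α x) (lorentzMap T α y) = mink x y := by
  have hD : 4 - ‖α‖ ^ 2 ≠ 0 := by nlinarith [norm_nonneg α]
  conv_rhs => rw [← liftVec_proj x, ← liftVec_proj y]
  simp only [lorentzMap_apply, mink_liftVec, inner_add_left, inner_add_right, real_inner_smul_left,
    real_inner_smul_right, LinearIsometryEquiv.inner_map_map, real_inner_self_eq_norm_sq,
    real_inner_comm α]
  field_simp
  ring

lemma lorentzMap_mem_Hyp (hα : ‖α‖ < 2) {x : Fin (n + 1) → ℝ} (hx : x ∈ Hyp n) :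
    lorentzMap T α x ∈ Hyp n := by
  refine ⟨(mink_lorentzMap hα x x).trans hx.1, ?_⟩
  obtain ⟨hxx, hx0⟩ := hx
  rw [← liftVec_proj x, mink_liftVec, real_inner_self_eq_norm_sq] at hxx
  have hpx : ‖proj x‖ < x 0 := by nlinarith [norm_nonneg (proj x)]
  have hs : -(x 0 * ‖α‖) ≤ ⟪T (proj x), α⟫ := by
    calc -(x 0 * ‖α‖) ≤ -(‖T (proj x)‖ * ‖α‖) := by
          rw [T.norm_map]; nlinarith [norm_nonneg α]
      _ ≤ ⟪T (proj x), α⟫ := neg_le_of_abs_le (abs_real_inner_le_norm _ _)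
  have hpos : 0 < x 0 * (2 - ‖α‖) ^ 2 := mul_pos hx0 (pow_pos (sub_pos.2 hα) 2)
  exact div_pos (by nlinarith) (by nlinarith [norm_nonneg α])

lemma lorentzMap_liftVec (hα : ‖α‖ < 2) (a : EuclideanSpace ℝ (Fin n)) :
    lorentzMap T α (liftVec (4 + ‖a‖ ^ 2 - ‖T a + α‖ ^ 2) ((4 : ℝ) • a))
      = liftVec (4 + ‖T a + α‖ ^ 2 - ‖a‖ ^ 2) ((4 : ℝ) • (T a + α)) := by
  have hD : 4 - ‖α‖ ^ 2 ≠ 0 := by nlinarith [norm_nonneg α]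
  have hb : ‖T a + α‖ ^ 2 = ‖a‖ ^ 2 + 2 * ⟪T a, α⟫ + ‖α‖ ^ 2 := by
    rw [norm_add_sq_real, T.norm_map]
  have hk : (4 * (4 + ‖a‖ ^ 2 - ‖T a + α‖ ^ 2) + 2 * ⟪T ((4 : ℝ) • a), α⟫) / (4 - ‖α‖ ^ 2) = 4 := by
    rw [hb, map_smul, real_inner_smul_left]
    field_simp
    ring
  rw [lorentzMap_apply, liftVec_zero, proj_liftVec, hk, smul_add]
  congr 1
  · rw [hb, map_smul, real_inner_smul_left]
    field_simp
    ring
  · rw [map_smul]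

lemma Psi2_eq_lorentzMap_Psi1 (hα : ‖α‖ < 2) {a : EuclideanSpace ℝ (Fin n)}
    (ha : ‖a‖ + ‖T a + α‖ < 2) : Psi2 a (T a + α) = lorentzMap T α (Psi1 a (T a + α)) := by
  rw [Psi2_eq_Psi1, Psi1_eq_smul_liftVec (by linarith), Psi1_eq_smul_liftVec ha, fQ_comm, map_smul,
    lorentzMap_liftVec hα]

end lorentzMap

theorem statement_9_general {n : ℕ}
    (T : EuclideanSpace ℝ (Fin n) ≃ₗᵢ[ℝ] EuclideanSpace ℝ (Fin n))
    (α : EuclideanSpace ℝ (Fin n)) (hα : ‖α‖ < 2) :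
    ∃ A : (Fin (n + 1) → ℝ) ≃ₗ[ℝ] (Fin (n + 1) → ℝ),
      (∀ x y, mink (A x) (A y) = mink x y) ∧
      (∀ x ∈ Hyp n, A x ∈ Hyp n) ∧
      (∀ y : EuclideanSpace ℝ (Fin n), ‖y‖ + ‖T y + α‖ < 2 →
        Psi2 y (T y + α) = A (Psi1 y (T y + α))) ∧
      (∀ y : EuclideanSpace ℝ (Fin n), ‖y‖ + ‖T.symm (y - α)‖ < 2 →
        Psi2 y (T.symm (y - α)) = A.symm (Psi1 y (T.symm (y - α)))) ∧
      ∀ A' : (Fin (n + 1) → ℝ) ≃ₗ[ℝ] (Fin (n + 1) → ℝ),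
        (∀ x y, mink (A' x) (A' y) = mink x y) →
        (∀ x ∈ Hyp n, A' x ∈ Hyp n) →
        (∀ y : EuclideanSpace ℝ (Fin n), ‖y‖ + ‖T y + α‖ < 2 →
          Psi2 y (T y + α) = A' (Psi1 y (T y + α))) →
        A' = A := by
  let A := LinearEquiv.ofInjectiveEndo (lorentzMap T α)
    (injective_of_mink_map_map _ (mink_lorentzMap hα))
  have hA : ∀ y, ‖y‖ + ‖T y + α‖ < 2 → Psi2 y (T y + α) = A (Psi1 y (T y + α)) :=
    fun y hy => Psi2_eq_lorentzMap_Psi1 hα hy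
  refine ⟨A, mink_lorentzMap hα, fun x hx => lorentzMap_mem_Hyp hα hx, hA, ?_, ?_⟩
  · intro y hy
    obtain ⟨b, rfl⟩ : ∃ b, y = T b + α := ⟨T.symm (y - α), by simp⟩
    simp only [add_sub_cancel_right, LinearIsometryEquiv.symm_apply_apply] at hy ⊢
    rw [LinearEquiv.eq_symm_apply, Psi2_eq_Psi1, ← Psi2_eq_Psi1 b, hA b (by linarith)]
  · intro A' _ _ hA'
    have hΩ : ∀ y : EuclideanSpace ℝ (Fin n), ‖y‖ < (2 - ‖α‖) / 2 → ‖y‖ + ‖T y + α‖ < 2 := by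
      intro y hy
      have := norm_add_le (T y) α
      rw [T.norm_map] at this
      linarith
    refine LinearEquiv.toLinearMap_injective
      (linearMap_ext_Psi1 (fun y => T y + α) (by linarith) hΩ fun y hy => ?_)
    simp only [LinearEquiv.coe_coe, ← hA' y (hΩ y hy), ← hA y (hΩ y hy)]

/-- every rigid motion `y ↦ Ty + α` of Euclidean `ℝⁿ` with `‖α‖ < 2`
determines a unique hyperbolic isometry `A` such that `Ψ(y, Ty + α) = (x, Ax)`
whenever `(y, Ty+α) ∈ Ω`; moreover the same `A` satisfies
`Ψ(y, T⁻¹(y − α)) = (x, A⁻¹x)` whenever `(y, T⁻¹(y − α)) ∈ Ω`. -/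
theorem statement_9 {n : ℕ} (hn : 1 ≤ n)
    (T : EuclideanSpace ℝ (Fin n) ≃ₗᵢ[ℝ] EuclideanSpace ℝ (Fin n))
    (α : EuclideanSpace ℝ (Fin n)) (hα : ‖α‖ < 2) :
    ∃ A : (Fin (n + 1) → ℝ) ≃ₗ[ℝ] (Fin (n + 1) → ℝ),
      (∀ x y, mink (A x) (A y) = mink x y) ∧
      (∀ x ∈ Hyp n, A x ∈ Hyp n) ∧
      (∀ y : EuclideanSpace ℝ (Fin n), ‖y‖ + ‖T y + α‖ < 2 →
        Psi2 y (T y + α) = A (Psi1 y (T y + α))) ∧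
      (∀ y : EuclideanSpace ℝ (Fin n), ‖y‖ + ‖T.symm (y - α)‖ < 2 →
        Psi2 y (T.symm (y - α)) = A.symm (Psi1 y (T.symm (y - α)))) ∧
      ∀ A' : (Fin (n + 1) → ℝ) ≃ₗ[ℝ] (Fin (n + 1) → ℝ),
        (∀ x y, mink (A' x) (A' y) = mink x y) →
        (∀ x ∈ Hyp n, A' x ∈ Hyp n) →
        (∀ y : EuclideanSpace ℝ (Fin n), ‖y‖ + ‖T y + α‖ < 2 →
          Psi2 y (T y + α) = A' (Psi1 y (T y + α))) →
        A' = A :=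
  statement_9_general T α hα
end
end

section
/- Let A : ℝ^{n+1} → ℝ^{n+1} be a linear map preserving the Minkowski product (⟨Ax, Ay⟩ = ⟨x, y⟩ for all x, y) with ⟨Ae + e, e⟩ ≠ 0. Define the linear map T by T(x) = A x − (⟨Ax + x, e⟩/⟨Ae + e, e⟩)·(Ae + e). Then T preserves the Minkowski product and T(e) = −e. (Consequently T maps the Minkowski-orthogonal complement {x : ⟨x, e⟩ = 0} = {0} × ℝⁿ to itself and restricts there to a Euclidean linear isometry.) -/
open scoped BigOperators

noncomputable section

/-! `T` is the reflection `F_u` in `u = Ae + e` composed with the isometry `A`. Since `A` preserves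
the form, `⟨u, u⟩ = 2⟨u, e⟩` and `⟨u, Ax⟩ = ⟨Ax + x, e⟩`, which turns `F_u (A x)` into the formula
for `T x`; a reflection in an anisotropic vector preserves any symmetric bilinear form. Finally
`T e = Ae - u = -e`. -/

namespace LinearMap.BilinForm

variable {K V : Type*} [Field K] [AddCommGroup V] [Module K V] {B : LinearMap.BilinForm K V}

lemma isOrthogonal_preReflection (hB : B.IsSymm) {u : V} (hu : B u u ≠ 0) :
    B.IsOrthogonal (Module.preReflection u ((2 / B u u) • B u)) := by
  intro x y
  simp only [Module.preReflection_apply, map_sub, map_smul, LinearMap.sub_apply,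
    LinearMap.smul_apply, smul_eq_mul]
  rw [hB.eq x u]
  field_simp
  ring

variable {A : V →ₗ[K] V}

lemma apply_add_self_apply_left (hB : B.IsSymm) (hA : B.IsOrthogonal A) (e x : V) :
    B (A e + e) (A x) = B (A x + x) e := by
  rw [map_add, LinearMap.add_apply, hA, hB.eq e x, hB.eq e (A x), add_comm, map_add,
    LinearMap.add_apply]

lemma apply_add_self_apply_add_self (hB : B.IsSymm) (hA : B.IsOrthogonal A) (e : V) :
    B (A e + e) (A e + e) = 2 * B (A e + e) e := by
  rw [map_add, apply_add_self_apply_left hB hA, two_mul]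

lemma preReflection_apply_add_self_apply [NeZero (2 : K)] (hB : B.IsSymm)
    (hA : B.IsOrthogonal A) {e : V} (he : B (A e + e) e ≠ 0) (x : V) :
    Module.preReflection (A e + e) ((2 / B (A e + e) (A e + e)) • B (A e + e)) (A x) =
      A x - (B (A x + x) e / B (A e + e) e) • (A e + e) := by
  rw [Module.preReflection_apply, LinearMap.smul_apply, apply_add_self_apply_left hB hA,
    apply_add_self_apply_add_self hB hA, smul_eq_mul]
  congr 2
  field_simp

theorem isOrthogonal_sub_smul_apply_add_self [NeZero (2 : K)] (hB : B.IsSymm)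
    (hA : B.IsOrthogonal A) {e : V} (he : B (A e + e) e ≠ 0) :
    B.IsOrthogonal fun x ↦ A x - (B (A x + x) e / B (A e + e) e) • (A e + e) := by
  have hu : B (A e + e) (A e + e) ≠ 0 := by
    rw [apply_add_self_apply_add_self hB hA]
    exact mul_ne_zero two_ne_zero he
  intro x y
  dsimp only
  rw [← preReflection_apply_add_self_apply hB hA he x,
    ← preReflection_apply_add_self_apply hB hA he y]
  exact (isOrthogonal_preReflection hB hu _ _).trans (hA x y)

lemma sub_smul_apply_add_self_self {e : V} (he : B (A e + e) e ≠ 0) :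
    A e - (B (A e + e) e / B (A e + e) e) • (A e + e) = -e := by
  rw [div_self he, one_smul]
  abel

end LinearMap.BilinForm

lemma mink_comm {n : ℕ} (x y : Fin (n + 1) → ℝ) : mink x y = mink y x := by
  simp only [mink, mul_comm]

lemma mink_add_left {n : ℕ} (x y z : Fin (n + 1) → ℝ) :
    mink (x + y) z = mink x z + mink y z := by
  simp only [mink, Pi.add_apply, add_mul, Finset.sum_add_distrib]
  ring

lemma mink_smul_left {n : ℕ} (c : ℝ) (x z : Fin (n + 1) → ℝ) :
    mink (c • x) z = c * mink x z := by
  simp only [mink, Pi.smul_apply, smul_eq_mul, mul_assoc, ← Finset.mul_sum]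
  ring

def minkForm (n : ℕ) : LinearMap.BilinForm ℝ (Fin (n + 1) → ℝ) :=
  LinearMap.mk₂ ℝ mink mink_add_left mink_smul_left
    (fun x y z ↦ by rw [mink_comm, mink_add_left, mink_comm y, mink_comm z])
    (fun c x z ↦ by rw [mink_comm, mink_smul_left, mink_comm, smul_eq_mul])

lemma minkForm_isSymm (n : ℕ) : (minkForm n).IsSymm := ⟨mink_comm⟩

theorem statement_18_general {n : ℕ}
    (A : (Fin (n + 1) → ℝ) →ₗ[ℝ] (Fin (n + 1) → ℝ))
    (hA : ∀ x y, mink (A x) (A y) = mink x y)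
    (he : mink (A (eVec n) + eVec n) (eVec n) ≠ 0)
    (T : (Fin (n + 1) → ℝ) → (Fin (n + 1) → ℝ))
    (hT : ∀ x, T x = A x -
      (mink (A x + x) (eVec n) / mink (A (eVec n) + eVec n) (eVec n)) •
        (A (eVec n) + eVec n)) :
    (∀ x y, mink (T x) (T y) = mink x y) ∧ T (eVec n) = -(eVec n) := by
  obtain rfl : T = fun x ↦ A x - (minkForm n (A x + x) (eVec n) /
      minkForm n (A (eVec n) + eVec n) (eVec n)) • (A (eVec n) + eVec n) := funext hT
  exact ⟨LinearMap.BilinForm.isOrthogonal_sub_smul_apply_add_self (minkForm_isSymm n) hA he,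
    LinearMap.BilinForm.sub_smul_apply_add_self_self he⟩

/-- for a Minkowski-product-preserving linear map `A` with
`⟨Ae + e, e⟩ ≠ 0`, the map `T x = Ax − (⟨Ax+x,e⟩/⟨Ae+e,e⟩)(Ae+e)` preserves the
Minkowski product and sends `e` to `−e`. -/
theorem statement_18 {n : ℕ} (hn : 1 ≤ n)
    (A : (Fin (n + 1) → ℝ) →ₗ[ℝ] (Fin (n + 1) → ℝ))
    (hA : ∀ x y, mink (A x) (A y) = mink x y)
    (he : mink (A (eVec n) + eVec n) (eVec n) ≠ 0)
    (T : (Fin (n + 1) → ℝ) → (Fin (n + 1) → ℝ))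
    (hT : ∀ x, T x = A x -
      (mink (A x + x) (eVec n) / mink (A (eVec n) + eVec n) (eVec n)) •
        (A (eVec n) + eVec n)) :
    (∀ x y, mink (T x) (T y) = mink x y) ∧ T (eVec n) = -(eVec n) :=
  statement_18_general A hA he T hT
end
end
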